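/- arXiv:1507.04242 — 4 statements merged into one kernel-verified Lean document; each statement's English description precedes it below -/
import Mathlib

section
/- Sub-traveling sum scaling: for α ∈ (0,2), letting A_j = ℓ_{j−1} − ℓ_{j+1} for the occupied sub-traveling cells (with appropriate parity), the sum Q_n = Σ_{j=0}^{n−1} A_j j² satisfies Q_n / n^{2−α} → α/(2 − α) as n → ∞. -/
/-!
Adding cell `n` to `Q_n` gives `Q_{n+2}`, so by the Stolz–Cesàro theorem, applied separately
along even and odd `n`, it suffices to compare the increment `(ℓ_{n-1} - ℓ_{n+1}) n² ∼ 2α n^{1-α}`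
with the increment `(n+2)^{2-α} - n^{2-α} ∼ 2(2-α) n^{1-α}`.
Both are instances of `(x+a)^s - (x+b)^s ∼ (a-b) s x^{s-1}`, which is the derivative at `0`
of `t ↦ (1+at)^s - (1+bt)^s` read off along `t = 1/x`.
-/

open Filter Topology Finset

noncomputable def ell (α : ℝ) (j : ℕ) : ℝ := ((j : ℝ) + (2:ℝ) ^ (1/α)) ^ (-α)

/-- Sub-traveling sum: sum over cells 0 ≤ j ≤ n-1 of the same parity as n. -/
noncomputable def Qsub (α : ℝ) (n : ℕ) : ℝ :=
  ∑ j ∈ Finset.range n,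
    (if j % 2 = n % 2 ∧ 1 ≤ j then ell α (j - 1) - ell α (j + 1) else 0) * (j:ℝ)^2

open Asymptotics

theorem tendsto_of_tendsto_two_mul_of_tendsto_two_mul_add_one {β : Type*} {f : ℕ → β}
    {l : Filter β} (h₀ : Tendsto (fun n => f (2 * n)) atTop l)
    (h₁ : Tendsto (fun n => f (2 * n + 1)) atTop l) : Tendsto f atTop l := by
  intro s hs
  obtain ⟨N₀, hN₀⟩ := eventually_atTop.1 (h₀ hs)
  obtain ⟨N₁, hN₁⟩ := eventually_atTop.1 (h₁ hs)
  refine eventually_atTop.2 ⟨2 * (N₀ + N₁), fun n hn => ?_⟩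
  obtain ⟨k, rfl | rfl⟩ := Nat.even_or_odd' n
  · exact hN₀ k (by omega)
  · exact hN₁ k (by omega)

theorem tendsto_div_of_tendsto_sub_div_sub {x y : ℕ → ℝ} {L : ℝ} (hy : StrictMono y)
    (hy_top : Tendsto y atTop atTop)
    (h : Tendsto (fun n => (x (n + 1) - x n) / (y (n + 1) - y n)) atTop (𝓝 L)) :
    Tendsto (fun n => x n / y n) atTop (𝓝 L) := by
  have hdy : ∀ n, 0 < y (n + 1) - y n := fun n => sub_pos.2 (hy n.lt_succ_self)
  have hstep : (fun n => x (n + 1) - x n - L * (y (n + 1) - y n)) =o[atTop]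
      fun n => y (n + 1) - y n := by
    rw [isLittleO_iff_tendsto fun n h => absurd h (hdy n).ne']
    simpa [sub_div, mul_div_cancel_right₀ _ (hdy _).ne'] using h.sub_const L
  have hsum := hstep.sum_range (fun n => (hdy n).le)
    (by simp only [sum_range_sub]; simpa only [sub_eq_add_neg] using
      tendsto_atTop_add_const_right _ (-y 0) hy_top)
  simp only [sum_sub_distrib, ← mul_sum, sum_range_sub (f := x), sum_range_sub (f := y)] at hsum
  have hy₀ : (fun n => y n - y 0) =O[atTop] y :=
    (IsEquivalent.refl.sub_isLittleO (isLittleO_const_left.2 (Or.inr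
      (tendsto_norm_atTop_atTop.comp hy_top)))).isBigO
  have hmain := (hsum.trans_isBigO hy₀).tendsto_div_nhds_zero
  have hconst : Tendsto (fun n => (x 0 - L * y 0) / y n) atTop (𝓝 0) :=
    tendsto_const_nhds.div_atTop hy_top
  have hlim := (hmain.add hconst).add_const L
  rw [zero_add, zero_add] at hlim
  refine hlim.congr' ?_
  filter_upwards [hy_top.eventually_ne_atTop 0] with n hn
  field_simp
  ring

theorem tendsto_div_of_tendsto_sub_two_div_sub_two {x y : ℕ → ℝ} {L : ℝ} (hy : StrictMono y)
    (hy_top : Tendsto y atTop atTop)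
    (h : Tendsto (fun n => (x (n + 2) - x n) / (y (n + 2) - y n)) atTop (𝓝 L)) :
    Tendsto (fun n => x n / y n) atTop (𝓝 L) := by
  have hsub : ∀ r, Tendsto (fun n => x (2 * n + r) / y (2 * n + r)) atTop (𝓝 L) := by
    intro r
    have hr : Tendsto (fun n => 2 * n + r) atTop atTop :=
      tendsto_atTop_mono (fun n => (by omega : n ≤ 2 * n + r)) tendsto_id
    have hshift : ∀ n, 2 * (n + 1) + r = 2 * n + r + 2 := fun n => by ring
    refine tendsto_div_of_tendsto_sub_div_sub (x := fun n => x (2 * n + r))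
      (hy.comp fun m n hmn => by omega) (hy_top.comp hr) ?_
    simpa only [Function.comp_def, hshift] using h.comp hr
  exact tendsto_of_tendsto_two_mul_of_tendsto_two_mul_add_one (hsub 0) (hsub 1)

theorem tendsto_rpow_add_sub_rpow_add_div_rpow_sub_one (a b s : ℝ) :
    Tendsto (fun x : ℝ => ((x + a) ^ s - (x + b) ^ s) / x ^ (s - 1)) atTop
      (𝓝 ((a - b) * s)) := by
  set φ : ℝ → ℝ := fun t => (1 + a * t) ^ s - (1 + b * t) ^ s
  have hφ : HasDerivAt φ ((a - b) * s) 0 := by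
    have hpow : ∀ c : ℝ, HasDerivAt (fun t => (1 + c * t) ^ s) (c * s) 0 := fun c => by
      simpa using (((hasDerivAt_id (0 : ℝ)).const_mul c).const_add 1).rpow_const (p := s)
        (by simp)
    rw [sub_mul]
    exact (hpow a).sub (hpow b)
  have hslope := (hasDerivAt_iff_tendsto_slope.1 hφ).comp
    (tendsto_inv_atTop_nhdsGT_zero.mono_right (nhdsWithin_mono _ fun t ht => ne_of_gt ht))
  refine hslope.congr' ?_
  filter_upwards [eventually_gt_atTop 0, eventually_gt_atTop (-a), eventually_gt_atTop (-b)]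
    with x hx hxa hxb
  have hfactor : ∀ c, -c < x → (x + c) ^ s = x ^ s * (1 + c * x⁻¹) ^ s := fun c hc => by
    have hquot : 1 + c * x⁻¹ = (x + c) / x := by field_simp
    rw [hquot, ← Real.mul_rpow hx.le (div_nonneg (by linarith) hx.le), mul_div_cancel₀ _ hx.ne']
  simp only [Function.comp_apply, slope_def_field, φ, hfactor a hxa, hfactor b hxb,
    Real.rpow_sub_one hx.ne', mul_zero, add_zero, Real.one_rpow, sub_self, sub_zero]
  field_simp

-- At `n = 0` the truncated index `0 - 1` is harmless: the new term carries the factor `0 ^ 2`.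
theorem Qsub_add_two (α : ℝ) (n : ℕ) :
    Qsub α (n + 2) = Qsub α n + (ell α (n - 1) - ell α (n + 1)) * (n : ℝ) ^ 2 := by
  rcases n.eq_zero_or_pos with rfl | hn
  · simp [Qsub, sum_range_succ]
  · have hpar : (n + 2) % 2 = n % 2 := Nat.add_mod_right n 2
    have hnext : (n + 1) % 2 ≠ n % 2 := by omega
    simp [Qsub, sum_range_succ, hpar, hnext, Nat.one_le_iff_ne_zero.mpr hn.ne']

theorem tendsto_ell_sub_ell_mul_sq_div_rpow (α : ℝ) :
    Tendsto (fun n : ℕ => (ell α (n - 1) - ell α (n + 1)) * (n : ℝ) ^ 2 / (n : ℝ) ^ (1 - α)) atTop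
      (𝓝 (2 * α)) := by
  have h := (tendsto_rpow_add_sub_rpow_add_div_rpow_sub_one
    ((2 : ℝ) ^ (1 / α) - 1) ((2 : ℝ) ^ (1 / α) + 1) (-α)).comp tendsto_natCast_atTop_atTop
  rw [show ((2 : ℝ) ^ (1 / α) - 1 - ((2 : ℝ) ^ (1 / α) + 1)) * -α = 2 * α by ring] at h
  refine h.congr' ?_
  filter_upwards [eventually_ge_atTop 1] with n hn
  have hn₀ : (n : ℝ) ≠ 0 := by positivity
  have hexp : (n : ℝ) ^ (1 - α) = (n : ℝ) ^ (-α - 1) * (n : ℝ) ^ 2 := by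
    rw [← Real.rpow_add_natCast hn₀]
    ring_nf
  simp only [Function.comp_apply, ell, hexp, Nat.cast_sub hn]
  push_cast
  rw [mul_div_mul_right _ _ (by positivity)]
  ring_nf

theorem subtraveling_sum_scaling_general (α : ℝ) (hα2 : α < 2) :
    Filter.Tendsto (fun n : ℕ => Qsub α n / (n:ℝ) ^ (2 - α))
      Filter.atTop (nhds (α / (2 - α))) := by
  have hq : 0 < 2 - α := by linarith
  refine tendsto_div_of_tendsto_sub_two_div_sub_two
    (fun m n hmn => Real.rpow_lt_rpow m.cast_nonneg (Nat.cast_lt.2 hmn) hq)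
    ((tendsto_rpow_atTop hq).comp tendsto_natCast_atTop_atTop) ?_
  have hden := (tendsto_rpow_add_sub_rpow_add_div_rpow_sub_one 2 0 (2 - α)).comp
    tendsto_natCast_atTop_atTop
  have hratio := (tendsto_ell_sub_ell_mul_sq_div_rpow α).div hden (by positivity)
  rw [show 2 * α / ((2 - 0) * (2 - α)) = α / (2 - α) by
    rw [sub_zero, mul_div_mul_left _ _ two_ne_zero]] at hratio
  refine hratio.congr' ?_
  filter_upwards [eventually_gt_atTop 0] with n hn
  simp only [Qsub_add_two, add_sub_cancel_left, add_zero, Nat.cast_add,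
    Nat.cast_ofNat, show 2 - α - 1 = 1 - α by ring]
  exact div_div_div_cancel_right₀ (by positivity) _ _

theorem subtraveling_sum_scaling (α : ℝ) (hα : 0 < α) (hα2 : α < 2) :
    Filter.Tendsto (fun n : ℕ => Qsub α n / (n:ℝ) ^ (2 - α))
      Filter.atTop (nhds (α / (2 - α))) :=
  subtraveling_sum_scaling_general α hα2
end

section
/- Normal diffusion at α = 1: for the slicer map with α = 1, the MSD satisfies ⟨ΔX²_n⟩ / n → 4 as n → ∞. -/
open Filter Topology Finset

noncomputable def slicerA (α : ℝ) (n : ℕ) (j : ℤ) : ℝ :=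
  if j.natAbs = n then ell α (n - 1)
  else if j.natAbs < n ∧ j.natAbs % 2 = n % 2 then
    (if j = 0 then 2 * (ell α 0 - ell α 1)
     else ell α (j.natAbs - 1) - ell α (j.natAbs + 1))
  else 0

noncomputable def msd (α : ℝ) (n : ℕ) : ℝ :=
  ∑ j ∈ Finset.Icc (-(n:ℤ)) (n:ℤ), slicerA α n j * (j:ℝ)^2

/-!
The slicer distribution at time `n + 2` differs from the one at time `n` only at `|j| = n`,
where it loses the mass `ℓ (n + 1)` (on each side), and at `|j| = n + 2`, where it gains it.
Hence the MSD grows by `2 ℓ (n + 1) ((n + 2)² - n²) = 8 (n + 1) ℓ (n + 1)` every two steps,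
which for `α = 1` tends to `8`; the MSD therefore grows like `4 n`.
-/

lemma ell_one (j : ℕ) : ell 1 j = ((j : ℝ) + 2)⁻¹ := by
  simp [ell, Real.rpow_neg_one]

lemma slicerA_eq_zero_of_lt {α : ℝ} {n : ℕ} {j : ℤ} (h : n < j.natAbs) : slicerA α n j = 0 := by
  simp [slicerA, h.ne', lt_asymm h]

lemma slicerA_add_two_mul_sq (α : ℝ) (n : ℕ) (j : ℤ) :
    slicerA α (n + 2) j * (j : ℝ) ^ 2 = slicerA α n j * (j : ℝ) ^ 2 +
      ell α (n + 1) * ((if j.natAbs = n + 2 then (j : ℝ) ^ 2 else 0) -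
        (if j.natAbs = n then (j : ℝ) ^ 2 else 0)) := by
  -- at `j = 0` the two distributions differ, but the weight `j ^ 2` vanishes
  rcases eq_or_ne j 0 with rfl | hj
  · simp
  unfold slicerA
  split_ifs <;> try omega
  · rw [show n + 2 - 1 = n + 1 by omega]; ring
  · rw [‹j.natAbs = n›]; ring
  all_goals ring

lemma sum_Icc_ite_natAbs_eq (m M : ℕ) (h : m ≤ M) :
    ∑ j ∈ Icc (-(M : ℤ)) M, (if j.natAbs = m then (j : ℝ) ^ 2 else 0) = 2 * (m : ℝ) ^ 2 := by
  rw [← sum_filter]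
  rcases Nat.eq_zero_or_pos m with rfl | hm
  · exact (sum_eq_zero fun j hj => by simp_all).trans (by simp)
  · have : (Icc (-(M : ℤ)) M).filter (fun j => j.natAbs = m) = {(m : ℤ), -(m : ℤ)} := by
      ext j
      simp only [mem_filter, mem_Icc, mem_insert, mem_singleton]
      omega
    rw [this, sum_pair (by omega)]
    push_cast
    ring

lemma msd_eq_sum_Icc_of_le (α : ℝ) {n M : ℕ} (h : n ≤ M) :
    msd α n = ∑ j ∈ Icc (-(M : ℤ)) M, slicerA α n j * (j : ℝ) ^ 2 := by
  refine sum_subset (Icc_subset_Icc (by omega) (by omega)) fun j _ hj => ?_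
  rw [slicerA_eq_zero_of_lt (by simp only [mem_Icc] at hj; omega), zero_mul]

lemma msd_add_two_sub (α : ℝ) (n : ℕ) :
    msd α (n + 2) - msd α n = 8 * (n + 1) * ell α (n + 1) := by
  rw [msd, sum_congr rfl fun j _ => slicerA_add_two_mul_sq α n j, sum_add_distrib, ← mul_sum,
    sum_sub_distrib, sum_Icc_ite_natAbs_eq _ _ le_rfl, sum_Icc_ite_natAbs_eq _ _ (by omega),
    ← msd_eq_sum_Icc_of_le α (by omega : n ≤ n + 2)]
  push_cast
  ring

lemma abs_le_max_add_sum_abs_sub_two (v : ℕ → ℝ) (n : ℕ) :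
    |v n| ≤ max |v 0| |v 1| + ∑ k ∈ range n, |v (k + 2) - v k| := by
  induction n using Nat.twoStepInduction with
  | zero => simp
  | one => simpa using le_add_of_le_of_nonneg (le_max_right _ _) (abs_nonneg (v 2 - v 0))
  | more n ih _ =>
    have := abs_sub_abs_le_abs_sub (v (n + 2)) (v n)
    have := abs_nonneg (v (n + 3) - v (n + 1))
    rw [sum_range_succ, sum_range_succ]
    linarith

lemma tendsto_div_natCast_zero_of_tendsto_sub_two {v : ℕ → ℝ}
    (h : Tendsto (fun n => v (n + 2) - v n) atTop (𝓝 0)) :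
    Tendsto (fun n => v n / n) atTop (𝓝 0) := by
  have hbound : Tendsto (fun n : ℕ => max |v 0| |v 1| / n +
      (n⁻¹ : ℝ) * ∑ k ∈ range n, |v (k + 2) - v k|) atTop (𝓝 0) := by
    simpa using (tendsto_const_div_atTop_nhds_zero_nat (max |v 0| |v 1|)).add
      (by simpa using h.abs.cesaro)
  refine squeeze_zero_norm (fun n => ?_) hbound
  rw [norm_div, Real.norm_eq_abs, Real.norm_natCast, ← div_eq_inv_mul, ← add_div]
  exact div_le_div_of_nonneg_right (abs_le_max_add_sum_abs_sub_two v n) n.cast_nonneg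

lemma tendsto_div_natCast_of_tendsto_sub_two {u : ℕ → ℝ} {c : ℝ}
    (h : Tendsto (fun n => u (n + 2) - u n) atTop (𝓝 (2 * c))) :
    Tendsto (fun n => u n / n) atTop (𝓝 c) := by
  have hv := tendsto_div_natCast_zero_of_tendsto_sub_two (v := fun n => u n - c * n) <|
    (tendsto_sub_nhds_zero_iff.2 h).congr fun n => by push_cast; ring
  refine (zero_add c ▸ hv.add_const c).congr' ?_
  filter_upwards [eventually_ne_atTop 0] with n hn
  field_simp
  ring

theorem slicer_normal_diffusion :
    Filter.Tendsto (fun n : ℕ => msd 1 n / (n:ℝ))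
      Filter.atTop (nhds 4) := by
  refine tendsto_div_natCast_of_tendsto_sub_two ?_
  have h : Tendsto (fun n : ℕ => 8 - 16 / ((n + 3 : ℕ) : ℝ)) atTop (𝓝 (8 - 0)) :=
    tendsto_const_nhds.sub ((tendsto_const_div_atTop_nhds_zero_nat 16).comp
      (tendsto_add_atTop_nat 3))
  refine (by norm_num : (8 : ℝ) - 0 = 2 * 4) ▸ h.congr fun n => ?_
  rw [msd_add_two_sub, ell_one]
  push_cast
  field_simp
  ring
end

section
/- Logarithmic diffusion at α = 2: for the slicer map with α = 2, the MSD satisfies ⟨ΔX²_n⟩ / log n → C for some constant C > 0; in particular ⟨ΔX²_n⟩ → ∞ but ⟨ΔX²_n⟩ / n^γ → 0 for every γ > 0. -/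
open Filter Topology Finset

/-!
Going from `n` to `n + 2` only changes the outermost weights: `A_{±n}` loses `ℓ_{n+1}` and the new
weights `A_{±(n+2)} = ℓ_{n+1}` appear, so `msd (n + 2) = msd n + 8 (n + 1) ℓ_{n+1}`. For `α = 2`
this increment is `4 (log (n + 2) - log n)` up to an error dominated by the telescoping
`16 / n - 16 / (n + 2)`, so `msd n - 4 log n` stays bounded and `msd n / log n → 4`.
-/

open Real

theorem sum_Icc_natAbs_add {M : Type*} [AddCommMonoid M] (g : ℕ → M) (n : ℕ) :
    ∑ j ∈ Icc (-(n : ℤ)) n, g j.natAbs + g 0 = 2 • ∑ k ∈ range (n + 1), g k := by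
  induction n with
  | zero => simp [two_nsmul]
  | succ n ih =>
    have hIcc : Icc (-((n + 1 : ℕ) : ℤ)) ((n + 1 : ℕ) : ℤ)
        = insert (-((n : ℤ) + 1)) (insert ((n : ℤ) + 1) (Icc (-(n : ℤ)) n)) := by
      ext j; simp only [mem_Icc, mem_insert]; omega
    rw [hIcc, sum_insert (by simp only [mem_insert, mem_Icc]; omega),
      sum_insert (by simp only [mem_Icc]; omega), sum_range_succ, nsmul_add, ← ih]
    have hneg : (-((n : ℤ) + 1)).natAbs = n + 1 := by omega
    have hpos : ((n : ℤ) + 1).natAbs = n + 1 := by omega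
    rw [hneg, hpos, two_nsmul]
    abel

theorem slicerA_natAbs (α : ℝ) (n : ℕ) (j : ℤ) : slicerA α n j = slicerA α n j.natAbs := by
  simp only [slicerA, Int.natAbs_natCast, Int.natCast_eq_zero, Int.natAbs_eq_zero]

theorem slicerA_of_lt {α : ℝ} {n k : ℕ} (h : n < k) : slicerA α n k = 0 := by
  simp only [slicerA, Int.natAbs_natCast]
  rw [if_neg h.ne', if_neg (by omega)]

theorem msd_eq_two_mul_sum {α : ℝ} {n m : ℕ} (h : n ≤ m) :
    msd α n = 2 * ∑ k ∈ range (m + 1), slicerA α n k * (k : ℝ) ^ 2 := by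
  have hsymm := sum_Icc_natAbs_add (fun k => slicerA α n k * (k : ℝ) ^ 2) n
  simp only [Nat.cast_zero, ne_eq, OfNat.ofNat_ne_zero, not_false_eq_true, zero_pow, mul_zero,
    add_zero, nsmul_eq_mul, Nat.cast_ofNat] at hsymm
  rw [msd, ← sum_subset (range_subset_range.2 (Nat.succ_le_succ h)), ← hsymm]
  · refine sum_congr rfl fun j _ => ?_
    rw [slicerA_natAbs, Nat.cast_natAbs (α := ℝ), Int.cast_abs, sq_abs]
  · intro k _ hk
    rw [slicerA_of_lt (by simp at hk; omega), zero_mul]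

theorem slicerA_add_two_sub_mul (α : ℝ) (n k : ℕ) :
    (slicerA α (n + 2) k - slicerA α n k) * (k : ℝ) ^ 2 =
      ell α (n + 1) * ((if k = n + 2 then ((n : ℝ) + 2) ^ 2 else 0) -
        if k = n then (n : ℝ) ^ 2 else 0) := by
  simp only [slicerA, Int.natAbs_natCast, Nat.cast_eq_zero]
  split_ifs <;> first | omega | (subst_vars; push_cast; ring)

theorem msd_add_two (α : ℝ) (n : ℕ) : msd α (n + 2) = msd α n + 8 * (n + 1) * ell α (n + 1) := by
  rw [msd_eq_two_mul_sum le_rfl, msd_eq_two_mul_sum (m := n + 2) (by omega), ← sub_eq_iff_eq_add',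
    ← mul_sub, ← sum_sub_distrib]
  simp only [← sub_mul, slicerA_add_two_sub_mul, ← mul_sum, sum_sub_distrib, sum_ite_eq',
    mem_range]
  rw [if_pos (by omega), if_pos (by omega)]
  ring

theorem ell_two_eq (j : ℕ) : ell 2 j = (((j : ℝ) + √2) ^ 2)⁻¹ := by
  rw [ell, ← sqrt_eq_rpow, show (-2 : ℝ) = -((2 : ℕ) : ℝ) by norm_num,
    rpow_neg (by positivity), rpow_natCast]

theorem two_div_add_two_le_log_add_two_sub_log {x : ℝ} (hx : 0 < x) :
    2 / (x + 2) ≤ log (x + 2) - log x := by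
  have h := log_le_sub_one_of_pos (show 0 < x / (x + 2) by positivity)
  rw [log_div hx.ne' (by positivity)] at h
  have : x / (x + 2) - 1 = -(2 / (x + 2)) := by field_simp; ring
  linarith

theorem log_add_two_sub_log_le_two_div {x : ℝ} (hx : 0 < x) :
    log (x + 2) - log x ≤ 2 / x := by
  have h := log_le_sub_one_of_pos (show 0 < (x + 2) / x by positivity)
  rw [log_div (by positivity) hx.ne'] at h
  have : (x + 2) / x - 1 = 2 / x := by field_simp; ring
  linarith

theorem abs_increment_sub_log_le {x : ℝ} (hx : 0 < x) :
    |8 * (x + 1) / (x + 1 + √2) ^ 2 - 4 * (log (x + 2) - log x)| ≤ 16 / x - 16 / (x + 2) := by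
  have hs2 : √2 ^ 2 = 2 := sq_sqrt (by norm_num)
  have hs1 : 1 < √2 := by rw [lt_sqrt] <;> norm_num
  have hs3 : √2 < 3 / 2 := by rw [sqrt_lt'] <;> norm_num
  have hlo := two_div_add_two_le_log_add_two_sub_log hx
  have hhi := log_add_two_sub_log_le_two_div hx
  have hinc_le : 8 * (x + 1) / (x + 1 + √2) ^ 2 ≤ 8 / (x + 1) := by
    rw [div_le_div_iff₀ (by positivity) (by positivity)]; nlinarith
  have hinc_ge : 8 / x - 32 / (x * (x + 2)) ≤ 8 * (x + 1) / (x + 1 + √2) ^ 2 := by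
    rw [show 8 / x - 32 / (x * (x + 2)) = 8 * (x - 2) / (x * (x + 2)) by field_simp; ring,
      div_le_div_iff₀ (by positivity) (by positivity)]
    nlinarith [mul_pos hx hx, mul_pos (mul_pos hx hx) (sub_pos.2 hs3), mul_pos hx (sub_pos.2 hs1)]
  have h16 : 16 / x - 16 / (x + 2) = 32 / (x * (x + 2)) := by field_simp; ring
  have hgap : 8 / (x + 1) - 8 / (x + 2) ≤ 32 / (x * (x + 2)) := by
    rw [div_sub_div _ _ (by positivity) (by positivity),
      div_le_div_iff₀ (by positivity) (by positivity)]
    nlinarith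
  have h8 : 4 * (2 / x) = 8 / x := by ring
  have h8' : 4 * (2 / (x + 2)) = 8 / (x + 2) := by ring
  rw [h16, abs_le]
  constructor <;> linarith

theorem abs_le_of_abs_sub_add_two_le {u g : ℕ → ℝ} (hg : ∀ n, 0 ≤ g n)
    (h : ∀ n, |u (n + 2) - u n| ≤ g n - g (n + 2)) (n : ℕ) :
    |u n| ≤ max (|u 0| + g 0) (|u 1| + g 1) := by
  suffices hdecr : ∀ n, |u n| + g n ≤ max (|u 0| + g 0) (|u 1| + g 1) by
    linarith [hdecr n, hg n]
  intro n
  induction n using Nat.twoStepInduction with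
  | zero => exact le_max_left _ _
  | one => exact le_max_right _ _
  | more n ih _ =>
    have := abs_sub_abs_le_abs_sub (u (n + 2)) (u n)
    linarith [h n]

theorem tendsto_div_of_isBigO_sub_mul {α : Type*} {l : Filter α} {f g : α → ℝ} {c : ℝ}
    (hg : Tendsto g l atTop) (h : (fun x => f x - c * g x) =O[l] fun _ => (1 : ℝ)) :
    Tendsto (fun x => f x / g x) l (𝓝 c) := by
  have hsmall : (fun x => f x - c * g x) =o[l] g :=
    h.trans_isLittleO ((Asymptotics.isLittleO_one_left_iff ℝ).2
      (tendsto_norm_atTop_atTop.comp hg))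
  have hlim := hsmall.tendsto_div_nhds_zero.add_const c
  rw [zero_add] at hlim
  refine hlim.congr' ?_
  filter_upwards [hg.eventually_gt_atTop 0] with x hx
  field_simp
  ring

theorem msd_two_sub_log_isBigO :
    (fun n : ℕ => msd 2 n - 4 * log n) =O[atTop] fun _ => (1 : ℝ) := by
  set D : ℕ → ℝ := fun n => msd 2 n - 4 * log n
  have hstep : ∀ n : ℕ,
      |D (n + 1 + 2) - D (n + 1)| ≤ 16 / ((n : ℝ) + 1) - 16 / ((n + 2 : ℕ) + 1) := by
    intro n
    have := abs_increment_sub_log_le (x := (n : ℝ) + 1) (by positivity)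
    simp only [D, msd_add_two, ell_two_eq]
    push_cast
    convert this using 2 <;> ring
  -- shifted by one, since `log 0` and `16 / 0` are junk values
  have hbdd := abs_le_of_abs_sub_add_two_le (u := fun n => D (n + 1))
    (fun n => by positivity) hstep
  refine Asymptotics.IsBigO.of_bound (max (|D 1| + 16) (|D 2| + 8)) ?_
  filter_upwards [eventually_ge_atTop 1] with n hn
  obtain ⟨m, rfl⟩ := Nat.exists_eq_add_of_le' hn
  have hm := hbdd m
  norm_num at hm ⊢
  exact hm

theorem slicer_log_diffusion :
    ∃ C : ℝ, 0 < C ∧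
      Filter.Tendsto (fun n : ℕ => msd 2 n / Real.log n) Filter.atTop (nhds C) ∧
      Filter.Tendsto (fun n : ℕ => msd 2 n) Filter.atTop Filter.atTop ∧
      ∀ γ : ℝ, 0 < γ →
        Filter.Tendsto (fun n : ℕ => msd 2 n / (n:ℝ) ^ γ) Filter.atTop (nhds 0) := by
  have hlog : Tendsto (fun n : ℕ => log n) atTop atTop :=
    tendsto_log_atTop.comp tendsto_natCast_atTop_atTop
  have hratio : Tendsto (fun n : ℕ => msd 2 n / log n) atTop (𝓝 4) :=
    tendsto_div_of_isBigO_sub_mul hlog msd_two_sub_log_isBigO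
  have hlog_pos : ∀ᶠ n : ℕ in atTop, 0 < log n := hlog.eventually_gt_atTop 0
  refine ⟨4, by norm_num, hratio, ?_, fun γ hγ => ?_⟩
  · refine (hratio.pos_mul_atTop (by norm_num) hlog).congr' ?_
    filter_upwards [hlog_pos] with n hn
    exact div_mul_cancel₀ _ hn.ne'
  · have hlog_rpow : Tendsto (fun n : ℕ => log n / (n : ℝ) ^ γ) atTop (𝓝 0) :=
      (isLittleO_log_rpow_atTop hγ).tendsto_div_nhds_zero.comp tendsto_natCast_atTop_atTop
    refine (mul_zero (4 : ℝ) ▸ hratio.mul hlog_rpow).congr' ?_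
    filter_upwards [hlog_pos] with n hn
    exact div_mul_div_cancel₀ hn.ne'
end

section
/- Monotonicity for the moment sums: for 0 < α ≤ 2, integer p ≥ 3 and c = 2^{1/α}, the function g(x) = ((x+1)^p − x^p)/(2x + 1 + c)^α is strictly increasing for x > 0. -/
/-!
Since `(N / D ^ α)' = D ^ (α - 1) (N' D - α D' N) / D ^ (2α)`, with `N = (x + 1) ^ p - x ^ p`,
`D = 2x + 1 + c` the claim reduces to `2α N < p A D`, where `A = (x + 1) ^ (p - 1) - x ^ (p - 1)`.
As `α ≤ 2` and `c ≥ 1`, it is enough that `4 N < 3 A (2x + 2)`; this follows from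
`N = (x + 1) A + x ^ (p - 1)` and Bernoulli's bound `A ≥ (p - 1) x ^ (p - 2) ≥ 2 x ^ (p - 2)`.
-/

theorem strictMonoOn_div_rpow_of_hasDerivAt {f g f' g' : ℝ → ℝ} {s : Set ℝ} (hs : Convex ℝ s)
    {α : ℝ} (hf : ∀ x ∈ s, HasDerivAt f (f' x) x) (hg : ∀ x ∈ s, HasDerivAt g (g' x) x)
    (hg₀ : ∀ x ∈ s, 0 < g x) (hfg : ∀ x ∈ interior s, α * g' x * f x < f' x * g x) :
    StrictMonoOn (fun x => f x / g x ^ α) s := by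
  have hderiv : ∀ x ∈ s, HasDerivAt (fun x => f x / g x ^ α)
      ((f' x * g x ^ α - f x * (g' x * α * g x ^ (α - 1))) / (g x ^ α) ^ 2) x := fun x hx =>
    (hf x hx).div ((hg x hx).rpow_const (Or.inl (hg₀ x hx).ne'))
      (Real.rpow_pos_of_pos (hg₀ x hx) α).ne'
  refine strictMonoOn_of_hasDerivWithinAt_pos hs
    (fun x hx => (hderiv x hx).continuousAt.continuousWithinAt)
    (fun x hx => (hderiv x (interior_subset hx)).hasDerivWithinAt) fun x hx => ?_
  have hgx := hg₀ x (interior_subset hx)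
  have hsplit : g x ^ α = g x ^ (α - 1) * g x := by
    rw [← Real.rpow_add_one hgx.ne', sub_add_cancel]
  rw [hsplit]
  refine div_pos ?_ (by positivity)
  calc 0 < g x ^ (α - 1) * (f' x * g x - α * g' x * f x) :=
        mul_pos (Real.rpow_pos_of_pos hgx _) (sub_pos.mpr (hfg x hx))
    _ = _ := by ring

theorem four_mul_add_one_pow_sub_pow_lt {x c : ℝ} (hx : 0 < x) (hc : 1 ≤ c) {p : ℕ}
    (hp : 3 ≤ p) :
    4 * ((x + 1) ^ p - x ^ p) < p * ((x + 1) ^ (p - 1) - x ^ (p - 1)) * (2 * x + 1 + c) := by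
  obtain ⟨m, rfl⟩ : ∃ m, p = m + 3 := ⟨p - 3, by omega⟩
  set A := (x + 1) ^ (m + 2) - x ^ (m + 2) with hAdef
  have hbernoulli : 2 * x ^ (m + 1) ≤ A := by
    have hpow := pow_add_mul_le_add_pow hx.le (by linarith : 0 ≤ 2 * x + 1) (m + 2)
    have hcoeff : (2 : ℝ) * x ^ (m + 1) ≤ (m + 2 : ℕ) * x ^ (m + 1) := by
      gcongr; push_cast; linarith [(m.cast_nonneg : (0 : ℝ) ≤ m)]
    rw [show m + 2 - 1 = m + 1 from rfl, mul_one] at hpow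
    linarith
  have hA : 0 < A := lt_of_lt_of_le (by positivity) hbernoulli
  have hsplit : (x + 1) ^ (m + 3) - x ^ (m + 3) = (x + 1) * A + x * x ^ (m + 1) := by ring
  have hp3 : (3 : ℝ) ≤ (m + 3 : ℕ) := by push_cast; linarith [(m.cast_nonneg : (0 : ℝ) ≤ m)]
  rw [hsplit, show m + 3 - 1 = m + 2 from rfl]
  calc 4 * ((x + 1) * A + x * x ^ (m + 1)) < 3 * A * (2 * x + 1 + 1) := by nlinarith
    _ ≤ (m + 3 : ℕ) * A * (2 * x + 1 + c) := by gcongr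

theorem moment_sum_monotonicity (α : ℝ) (hα : 0 < α) (hα2 : α ≤ 2)
    (p : ℕ) (hp : 3 ≤ p) :
    StrictMonoOn
      (fun x : ℝ => ((x + 1)^p - x^p) / (2*x + 1 + (2:ℝ)^(1/α)) ^ α)
      (Set.Ioi (0:ℝ)) := by
  have hc : 1 ≤ (2:ℝ) ^ (1 / α) := Real.one_le_rpow one_le_two (by positivity)
  refine strictMonoOn_div_rpow_of_hasDerivAt (convex_Ioi 0)
    (f' := fun x => p * ((x + 1) ^ (p - 1) - x ^ (p - 1))) (g' := fun _ => 2)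
    (fun x _ => ?_) (fun x _ => ?_) (fun x hx => ?_) fun x hx => ?_
  · exact ((((hasDerivAt_id' x).add_const 1).fun_pow p).fun_sub (hasDerivAt_pow p x)).congr_deriv
      (by ring)
  · simpa using (((hasDerivAt_id x).const_mul 2).add_const 1).add_const ((2:ℝ) ^ (1 / α))
  · have : (0 : ℝ) < x := hx; positivity
  · rw [interior_Ioi] at hx
    have hN : 0 < (x + 1) ^ p - x ^ p :=
      sub_pos.mpr (pow_lt_pow_left₀ (lt_add_one x) (le_of_lt hx) (by omega))
    calc α * 2 * ((x + 1) ^ p - x ^ p) ≤ 4 * ((x + 1) ^ p - x ^ p) := by nlinarith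
      _ < _ := four_mul_add_one_pow_sub_pow_lt hx hc hp
end
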